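/- arXiv:2112.13799 — 3 statements merged into one kernel-verified Lean document; each statement's English description precedes it below -/
import Mathlib

section
/- Let j be an integer with j > 1 and let p = 2j/(2j-1). Let G be a function in L^{2j} with Ĝ(n) real and Ĝ(n) ≥ 0 for all n ∈ ℤ, and set F = (conj G)^{j-1} G^j. If f is a function in L^p such that |f̂(n)| ≥ F̂(n) at every integer n where Ĝ(n) ≠ 0, then ‖f‖_p ≥ ‖F‖_p. -/
/-!
Write `N = ‖G‖_{2j}`. Because `Ĝ ≥ 0`, the function `G` is a Fourier majorant: any `u ∈ L^{2j}`
with `|û| ≤ Ĝ` has `|(u^j)^| ≤ (G^j)^` coefficientwise (expand `u^j` by convolution), hence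
`‖u‖_{2j} ≤ N` by Parseval applied to `u^j` and `G^j`. Testing `f` against the trigonometric
polynomials with coefficients `Ĝ(n) · sgn f̂(n)` and using Hölder gives `∑ |f̂(n)| Ĝ(n) ≤ ‖f‖_p N`.
On the other hand `F̂ ≥ 0`, and by Tonelli `∑ F̂(n) Ĝ(n) = ∑ |(G^j)^(k)|² = N^{2j}`. As
`F̂(n) ≤ |f̂(n)|` wherever `Ĝ(n) ≠ 0`, this gives `N^{2j} ≤ ‖f‖_p N`, i.e.
`‖F‖_p = N^{2j-1} ≤ ‖f‖_p`.
-/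

open MeasureTheory Complex
open scoped Real ENNReal

noncomputable section

instance : Fact (0 < 2 * Real.pi) := ⟨by positivity⟩

abbrev Circle2Pi := AddCircle (2 * Real.pi)

abbrev circleMeasure : Measure Circle2Pi := AddCircle.haarAddCircle

open scoped ComplexConjugate ComplexOrder

section Lp

variable {α E : Type*} [MeasurableSpace α] {μ : Measure α} [NormedDivisionRing E]

theorem MeasureTheory.eLpNorm_pow (u : α → E) {k : ℕ} (hk : k ≠ 0) (p : ℝ≥0∞) :
    eLpNorm (u ^ k) p μ = eLpNorm u (p * k) μ ^ k := by
  have hnorm : ∀ x, ‖(u ^ k) x‖ = ‖‖u x‖ ^ (k : ℝ)‖ := fun x => by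
    rw [Pi.pow_apply, norm_pow, Real.rpow_natCast, norm_pow, norm_norm]
  rw [eLpNorm_congr_norm_ae (.of_forall hnorm), eLpNorm_norm_rpow u (by positivity),
    ENNReal.ofReal_natCast, ENNReal.rpow_natCast]

theorem MeasureTheory.MemLp.pow [IsFiniteMeasure μ] {u : α → E} {p : ℝ≥0∞} {k : ℕ}
    (hu : MemLp u (p * k) μ) : MemLp (u ^ k) p μ := by
  rcases eq_or_ne k 0 with rfl | hk
  · rw [pow_zero]; exact memLp_const (1 : E)
  · exact ⟨hu.1.pow k, by rw [eLpNorm_pow u hk]; exact ENNReal.pow_lt_top hu.2⟩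

theorem MeasureTheory.MemLp.pow_of_le [IsFiniteMeasure μ] {u : α → E} {p : ℝ≥0∞} {n k : ℕ}
    (hu : MemLp u (p * n) μ) (hk : k ≤ n) : MemLp (u ^ k) p μ :=
  (hu.mono_exponent (by gcongr)).pow

theorem MeasureTheory.eLpNorm_conj_pow_mul_pow (G : α → ℂ) (n : ℕ) (p : ℝ≥0∞) :
    eLpNorm (fun t => conj (G t) ^ n * G t ^ (n + 1)) p μ =
      eLpNorm G (p * (2 * n + 1 : ℕ)) μ ^ (2 * n + 1) := by
  rw [← eLpNorm_pow G (k := 2 * n + 1) (by omega)]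
  refine eLpNorm_congr_norm_ae (.of_forall fun t => ?_)
  simp only [norm_mul, norm_pow, RCLike.norm_conj, Pi.pow_apply, ← pow_add]
  ring_nf

end Lp

theorem ENNReal.holderConjugate_div_sub_one {q : ℝ≥0∞} (hq : 1 ≤ q) (hq' : q ≠ ∞) :
    (q / (q - 1)).HolderConjugate q := by
  have hq0 : q ≠ 0 := (zero_lt_one.trans_le hq).ne'
  rw [ENNReal.holderConjugate_iff, ENNReal.inv_div (.inl (ENNReal.sub_ne_top hq')) (.inr hq0),
    ← one_div q, ENNReal.div_add_div_same, tsub_add_cancel_of_le hq, ENNReal.div_self hq0 hq']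

theorem ENNReal.pow_le_of_pow_succ_le_mul {a b : ℝ≥0∞} {m : ℕ} (hm : m ≠ 0) (ha : a ≠ ∞)
    (h : a ^ (m + 1) ≤ b * a) : a ^ m ≤ b := by
  rcases eq_or_ne a 0 with rfl | ha0
  · simp [hm]
  · rw [pow_succ] at h
    exact (ENNReal.mul_le_mul_iff_left ha0 ha).1 h

theorem Complex.ofReal_norm_of_nonneg {z : ℂ} (hz : 0 ≤ z) : (‖z‖ : ℂ) = z := by
  rw [← Complex.re_eq_norm.2 hz]
  exact (Complex.eq_re_of_ofReal_le hz).symm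

theorem Complex.conj_exp_arg_mul_I_mul_self (z : ℂ) : conj (exp (arg z * I)) * z = ‖z‖ :=
  calc conj (exp (arg z * I)) * z = ‖z‖ * (conj (exp (arg z * I)) * exp (arg z * I)) := by
        rw [mul_left_comm, norm_mul_exp_arg_mul_I]
    _ = ‖z‖ := by rw [conj_mul', norm_exp_ofReal_mul_I]; simp

theorem Complex.enorm_eq_tsum_enorm_of_hasSum {ι : Type*} {x : ι → ℂ} {a : ℂ} (hx : HasSum x a)
    (h0 : ∀ i, 0 ≤ x i) : ‖a‖ₑ = ∑' i, ‖x i‖ₑ := by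
  have hre := Complex.hasSum_re hx
  rw [← ofReal_norm, ← Complex.re_eq_norm.2 (hx.nonneg h0), ← hre.tsum_eq,
    ENNReal.ofReal_tsum_of_nonneg (fun i => (Complex.nonneg_iff.1 (h0 i)).1) hre.summable]
  exact tsum_congr fun i => by rw [← ofReal_norm, ← Complex.re_eq_norm.2 (h0 i)]

theorem HasSum.ofReal_norm_le_of_bounded {ι : Type*} {x y : ι → ℂ} {a b : ℂ} (hx : HasSum x a)
    (hy : HasSum y b) (h : ∀ i, (‖x i‖ : ℂ) ≤ y i) : (‖a‖ : ℂ) ≤ b := by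
  have hre : ∀ i, ‖x i‖ ≤ (y i).re := fun i => by simpa using (Complex.le_def.1 (h i)).1
  have him : ∀ i, (y i).im = 0 := fun i => by simp [((Complex.le_def.1 (h i)).2).symm]
  refine Complex.le_def.2 ⟨?_, ?_⟩
  · simpa using hx.norm_le_of_bounded (Complex.hasSum_re hy) hre
  · have h0 : HasSum (fun i => (y i).im) 0 := by simpa only [him] using hasSum_zero
    exact h0.unique (Complex.hasSum_im hy)

section Fourier

variable {T : ℝ} [Fact (0 < T)]

local notation "𝕋" => AddCircle T

open AddCircle (haarAddCircle)

theorem fourierCoeff_mul_fourier (u : 𝕋 → ℂ) (m k : ℤ) :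
    fourierCoeff (fun t => u t * fourier m t) k = fourierCoeff u (k - m) := by
  simp only [fourierCoeff, smul_eq_mul]
  congr 1 with t
  rw [sub_eq_add_neg, neg_add, neg_neg, fourier_add]
  ring

theorem fourierCoeff_conj (u : 𝕋 → ℂ) (k : ℤ) :
    fourierCoeff (fun t => conj (u t)) k = conj (fourierCoeff u (-k)) := by
  simp only [fourierCoeff, smul_eq_mul, ← integral_conj, map_mul, neg_neg, fourier_neg]

theorem hasSum_conj_fourierCoeff_mul_fourierCoeff {u v : 𝕋 → ℂ}
    (hu : MemLp u 2 haarAddCircle) (hv : MemLp v 2 haarAddCircle) :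
    HasSum (fun k => conj (fourierCoeff u k) * fourierCoeff v k)
      (∫ t, conj (u t) * v t ∂haarAddCircle) := by
  have hrepr : ∀ (w : 𝕋 → ℂ) (hw : MemLp w 2 haarAddCircle) (k : ℤ),
      inner ℂ (fourierBasis k) (hw.toLp w) = fourierCoeff w k := fun w hw k => by
    rw [← fourierBasis.repr_apply_apply, fourierBasis_repr,
      fourierCoeff_congr_ae hw.coeFn_toLp]
  have hinner : inner ℂ (hu.toLp u) (hv.toLp v) = ∫ t, conj (u t) * v t ∂haarAddCircle := by
    rw [L2.inner_def]
    refine integral_congr_ae ?_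
    filter_upwards [hu.coeFn_toLp, hv.coeFn_toLp] with t hut hvt
    rw [hut, hvt, RCLike.inner_apply']
  have hterm : ∀ k, conj (fourierCoeff u k) * fourierCoeff v k =
      inner ℂ (hu.toLp u) (fourierBasis k) * inner ℂ (fourierBasis k) (hv.toLp v) := fun k => by
    rw [← inner_conj_symm, hrepr u hu, hrepr v hv]
  simpa only [hterm, hinner] using fourierBasis.hasSum_inner_mul_inner (hu.toLp u) (hv.toLp v)

theorem hasSum_fourierCoeff_conj_mul {u v : 𝕋 → ℂ}
    (hu : MemLp u 2 haarAddCircle) (hv : MemLp v 2 haarAddCircle) (m : ℤ) :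
    HasSum (fun k => conj (fourierCoeff u (k - m)) * fourierCoeff v k)
      (fourierCoeff (fun t => conj (u t) * v t) m) := by
  have hum : MemLp (fun t => u t * fourier m t) 2 haarAddCircle :=
    hu.of_le (hu.1.mul (map_continuous (fourier m)).aestronglyMeasurable)
      (.of_forall fun t => by simp [fourier_apply, Circle.norm_coe])
  convert hasSum_conj_fourierCoeff_mul_fourierCoeff hum hv using 1
  · simp only [fourierCoeff_mul_fourier]
  · simp only [fourierCoeff, smul_eq_mul, map_mul, fourier_neg]
    congr 1 with t
    ring

theorem hasSum_fourierCoeff_mul {u v : 𝕋 → ℂ}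
    (hu : MemLp u 2 haarAddCircle) (hv : MemLp v 2 haarAddCircle) (m : ℤ) :
    HasSum (fun k => fourierCoeff u (m - k) * fourierCoeff v k) (fourierCoeff (u * v) m) := by
  have hu' : MemLp (fun t => conj (u t)) 2 haarAddCircle :=
    hu.of_le (continuous_conj.comp_aestronglyMeasurable hu.1) (.of_forall fun t => by simp)
  convert hasSum_fourierCoeff_conj_mul hu' hv m using 1
  · simp only [fourierCoeff_conj, conj_conj, neg_sub]
  · simp only [conj_conj]; rfl

theorem fourierCoeff_conj_mul_nonneg {u v : 𝕋 → ℂ}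
    (hu : MemLp u 2 haarAddCircle) (hv : MemLp v 2 haarAddCircle)
    (hu0 : ∀ k, 0 ≤ fourierCoeff u k) (hv0 : ∀ k, 0 ≤ fourierCoeff v k) (m : ℤ) :
    0 ≤ fourierCoeff (fun t => conj (u t) * v t) m :=
  (hasSum_fourierCoeff_conj_mul hu hv m).nonneg fun k =>
    mul_nonneg (by rw [starRingEnd_apply, star_nonneg_iff]; exact hu0 _) (hv0 k)

theorem eLpNorm_two_sq_eq_tsum_enorm_fourierCoeff {u : 𝕋 → ℂ}
    (hu : MemLp u 2 haarAddCircle) :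
    eLpNorm u 2 haarAddCircle ^ 2 = ∑' k, ‖fourierCoeff u k‖ₑ ^ 2 := by
  have h := lp.hasSum_norm (by norm_num) (fourierBasis.repr (hu.toLp u))
  simp only [LinearIsometryEquiv.norm_map, Lp.norm_toLp, ENNReal.toReal_ofNat,
    Real.rpow_two, fourierBasis_repr, fourierCoeff_congr_ae hu.coeFn_toLp] at h
  rw [← ENNReal.ofReal_toReal hu.eLpNorm_ne_top, ← ENNReal.ofReal_pow ENNReal.toReal_nonneg,
    ← h.tsum_eq, ENNReal.ofReal_tsum_of_nonneg (fun _ => by positivity) h.summable]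
  simp only [ENNReal.ofReal_pow (norm_nonneg _), ofReal_norm]

/-- The inequality is in the order on `ℂ`, so it also says that the Fourier coefficients of `U`
are real and nonnegative. -/
def FourierMajorizes (U u : 𝕋 → ℂ) : Prop :=
  ∀ n, (‖fourierCoeff u n‖ : ℂ) ≤ fourierCoeff U n

theorem fourierMajorizes_self_iff {u : 𝕋 → ℂ} :
    FourierMajorizes u u ↔ ∀ n, 0 ≤ fourierCoeff u n := by
  refine forall_congr' fun n => ⟨fun h => (Complex.zero_le_real.2 (norm_nonneg _)).trans h,
    fun h => (Complex.ofReal_norm_of_nonneg h).le⟩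

theorem fourierMajorizes_one : FourierMajorizes (1 : 𝕋 → ℂ) 1 := by
  have h1 : (1 : 𝕋 → ℂ) = fourier 0 := funext fun _ => fourier_zero.symm
  intro n
  rw [h1, fourierCoeff_fourier]
  by_cases hn : n = 0 <;> simp [hn]

theorem FourierMajorizes.mul {U V u v : 𝕋 → ℂ}
    (hU : MemLp U 2 haarAddCircle) (hV : MemLp V 2 haarAddCircle)
    (hu : MemLp u 2 haarAddCircle) (hv : MemLp v 2 haarAddCircle)
    (huU : FourierMajorizes U u) (hvV : FourierMajorizes V v) :
    FourierMajorizes (U * V) (u * v) := fun m =>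
  (hasSum_fourierCoeff_mul hu hv m).ofReal_norm_le_of_bounded (hasSum_fourierCoeff_mul hU hV m)
    fun k => by
      rw [norm_mul, Complex.ofReal_mul]
      exact mul_le_mul (huU _) (hvV k) (by simp) ((by simp : (0 : ℂ) ≤ _).trans (huU _))

theorem FourierMajorizes.pow {U u : 𝕋 → ℂ} {n : ℕ}
    (hU : MemLp U (2 * n) haarAddCircle) (hu : MemLp u (2 * n) haarAddCircle)
    (h : FourierMajorizes U u) {k : ℕ} (hk : k ≤ n) : FourierMajorizes (U ^ k) (u ^ k) := by
  induction k with
  | zero => simpa using fourierMajorizes_one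
  | succ k ih =>
    have hU1 : MemLp U 2 haarAddCircle := by simpa using hU.pow_of_le (k := 1) (by omega)
    have hu1 : MemLp u 2 haarAddCircle := by simpa using hu.pow_of_le (k := 1) (by omega)
    rw [pow_succ, pow_succ]
    exact (ih (by omega)).mul (hU.pow_of_le (by omega)) hU1 (hu.pow_of_le (by omega)) hu1 h

theorem FourierMajorizes.eLpNorm_two_le {U u : 𝕋 → ℂ}
    (hU : MemLp U 2 haarAddCircle) (hu : MemLp u 2 haarAddCircle)
    (h : FourierMajorizes U u) :
    eLpNorm u 2 haarAddCircle ≤ eLpNorm U 2 haarAddCircle := by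
  rw [← ENNReal.pow_le_pow_left_iff two_ne_zero, eLpNorm_two_sq_eq_tsum_enorm_fourierCoeff hu,
    eLpNorm_two_sq_eq_tsum_enorm_fourierCoeff hU]
  refine ENNReal.tsum_le_tsum fun k => pow_le_pow_left' ?_ 2
  rw [enorm_le_iff_norm_le]
  exact ((Complex.le_def.1 (h k)).1).trans (Complex.re_le_norm _)

theorem FourierMajorizes.eLpNorm_le {U u : 𝕋 → ℂ} {n : ℕ} (hn : n ≠ 0)
    (hU : MemLp U (2 * n) haarAddCircle) (hu : MemLp u (2 * n) haarAddCircle)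
    (h : FourierMajorizes U u) :
    eLpNorm u (2 * n) haarAddCircle ≤ eLpNorm U (2 * n) haarAddCircle := by
  rw [← ENNReal.pow_le_pow_left_iff hn, ← eLpNorm_pow _ hn, ← eLpNorm_pow _ hn]
  exact (h.pow hU hu le_rfl).eLpNorm_two_le hU.pow hu.pow

theorem fourierCoeff_sum_mul_fourier (s : Finset ℤ) (c : ℤ → ℂ) (m : ℤ) :
    fourierCoeff (fun t : 𝕋 => ∑ i ∈ s, c i * fourier i t) m = if m ∈ s then c m else 0 := by
  have hfun : (fun t : 𝕋 => ∑ i ∈ s, c i * fourier i t) = ∑ i ∈ s, c i • ⇑(fourier i) := by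
    ext t; simp [Finset.sum_apply]
  have hint : ∀ i ∈ s, Integrable (c i • ⇑(fourier i) : 𝕋 → ℂ) haarAddCircle :=
    fun i _ => ((map_continuous (fourier i)).memLp_of_hasCompactSupport (p := 1)
      (.of_compactSpace _)).integrable le_rfl |>.smul (c i)
  rw [hfun, fourierCoeff.sum s _ hint, Finset.sum_apply]
  simp only [fourierCoeff.const_smul, fourierCoeff_fourier, Pi.single_apply,
    smul_eq_mul, mul_ite, mul_one, mul_zero, Finset.sum_ite_eq]

theorem integral_mul_conj_sum_mul_fourier {f : 𝕋 → ℂ} (hf : Integrable f haarAddCircle)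
    (s : Finset ℤ) (c : ℤ → ℂ) :
    ∫ t, f t * conj (∑ i ∈ s, c i * fourier i t) ∂haarAddCircle =
      ∑ i ∈ s, conj (c i) * fourierCoeff f i := by
  have hterm : ∀ t, f t * conj (∑ i ∈ s, c i * fourier i t) =
      ∑ i ∈ s, conj (c i) * (fourier (-i) t • f t) := fun t => by
    simp only [smul_eq_mul, map_sum, map_mul, fourier_neg, Finset.mul_sum]
    exact Finset.sum_congr rfl fun i _ => by ring
  simp only [hterm]
  rw [integral_finsetSum _ fun i _ => (hf.fourier_smul (-i)).const_mul _]
  simp only [integral_const_mul, fourierCoeff]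

theorem tsum_enorm_fourierCoeff_mul_le {p : ℝ≥0∞} {n : ℕ} (hn : n ≠ 0)
    [p.HolderConjugate (2 * n)] {f G : 𝕋 → ℂ} (hf : MemLp f p haarAddCircle)
    (hG : MemLp G (2 * n) haarAddCircle) (hG0 : ∀ k, 0 ≤ fourierCoeff G k) :
    ∑' k, ‖fourierCoeff f k‖ₑ * ‖fourierCoeff G k‖ₑ ≤
      eLpNorm f p haarAddCircle * eLpNorm G (2 * n) haarAddCircle := by
  have hGreal : ∀ k, (‖fourierCoeff G k‖ : ℂ) = fourierCoeff G k :=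
    fun k => Complex.ofReal_norm_of_nonneg (hG0 k)
  rw [ENNReal.tsum_eq_iSup_sum]
  refine iSup_le fun s => ?_
  -- test `f` against the trigonometric polynomial with coefficients `Ĝ k · sgn f̂ k`
  set c : ℤ → ℂ := fun k => fourierCoeff G k * exp (arg (fourierCoeff f k) * I)
  set P : 𝕋 → ℂ := fun t => ∑ i ∈ s, c i * fourier i t
  have hP : MemLp P (2 * n) haarAddCircle :=
    (show Continuous P by fun_prop).memLp_of_hasCompactSupport (.of_compactSpace _)
  have hGP : FourierMajorizes G P := fun m => by
    rw [fourierCoeff_sum_mul_fourier]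
    split_ifs
    · rw [norm_mul, norm_exp_ofReal_mul_I, mul_one, hGreal]
    · simpa using hG0 m
  have hpair : ∫ t, f t * conj (P t) ∂haarAddCircle =
      ((∑ i ∈ s, ‖fourierCoeff f i‖ * ‖fourierCoeff G i‖ : ℝ) : ℂ) := by
    rw [integral_mul_conj_sum_mul_fourier
      (hf.integrable (ENNReal.HolderConjugate.one_le p (2 * n)))]
    push_cast
    refine Finset.sum_congr rfl fun i _ => ?_
    have hGconj : conj (fourierCoeff G i) = ‖fourierCoeff G i‖ := by rw [← conj_ofReal, hGreal]
    rw [map_mul, mul_assoc, Complex.conj_exp_arg_mul_I_mul_self, hGconj, mul_comm]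
  calc ∑ i ∈ s, ‖fourierCoeff f i‖ₑ * ‖fourierCoeff G i‖ₑ
      = ‖∫ t, f t * conj (P t) ∂haarAddCircle‖ₑ := by
        rw [hpair, ← ofReal_norm, Complex.norm_real, Real.norm_of_nonneg (by positivity),
          ENNReal.ofReal_sum_of_nonneg fun _ _ => by positivity]
        simp only [ENNReal.ofReal_mul (norm_nonneg _), ofReal_norm]
    _ ≤ eLpNorm (fun t => f t * conj (P t)) 1 haarAddCircle := by
        rw [eLpNorm_one_eq_lintegral_enorm]; exact enorm_integral_le_lintegral_enorm _
    _ ≤ eLpNorm f p haarAddCircle * eLpNorm P (2 * n) haarAddCircle := by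
        simpa using eLpNorm_le_eLpNorm_mul_eLpNorm'_of_norm hf.1 hP.1 (fun x y => x * conj y) 1
          (.of_forall fun t => by simp)
    _ ≤ eLpNorm f p haarAddCircle * eLpNorm G (2 * n) haarAddCircle := by
        gcongr
        exact hGP.eLpNorm_le hn hG hP

theorem tsum_enorm_fourierCoeff_conj_mul_mul_enorm {u w : 𝕋 → ℂ}
    (hu : MemLp u 2 haarAddCircle) (hw : MemLp w 2 haarAddCircle)
    (huw : MemLp (u * w) 2 haarAddCircle)
    (hu0 : ∀ k, 0 ≤ fourierCoeff u k) (hw0 : ∀ k, 0 ≤ fourierCoeff w k) :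
    ∑' i, ‖fourierCoeff (fun t => conj (u t) * (u * w) t) i‖ₑ * ‖fourierCoeff w i‖ₑ =
      ∑' k, ‖fourierCoeff (u * w) k‖ₑ ^ 2 := by
  have huw0 : ∀ k, 0 ≤ fourierCoeff (u * w) k := fourierMajorizes_self_iff.1 <|
    (fourierMajorizes_self_iff.2 hu0).mul hu hw hu hw (fourierMajorizes_self_iff.2 hw0)
  have hconj : ∀ i, ‖fourierCoeff (fun t => conj (u t) * (u * w) t) i‖ₑ =
      ∑' k, ‖fourierCoeff u (k - i)‖ₑ * ‖fourierCoeff (u * w) k‖ₑ := fun i => by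
    rw [Complex.enorm_eq_tsum_enorm_of_hasSum (hasSum_fourierCoeff_conj_mul hu huw i)
      fun k => mul_nonneg (by rw [starRingEnd_apply, star_nonneg_iff]; exact hu0 _) (huw0 k)]
    simp only [enorm_mul, RCLike.enorm_conj]
  have hmul : ∀ k, ‖fourierCoeff (u * w) k‖ₑ =
      ∑' i, ‖fourierCoeff u (k - i)‖ₑ * ‖fourierCoeff w i‖ₑ := fun k => by
    rw [Complex.enorm_eq_tsum_enorm_of_hasSum (hasSum_fourierCoeff_mul hu hw k)
      fun i => mul_nonneg (hu0 _) (hw0 i)]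
    simp only [enorm_mul]
  calc ∑' i, ‖fourierCoeff (fun t => conj (u t) * (u * w) t) i‖ₑ * ‖fourierCoeff w i‖ₑ
      = ∑' i, ∑' k,
          ‖fourierCoeff (u * w) k‖ₑ * (‖fourierCoeff u (k - i)‖ₑ * ‖fourierCoeff w i‖ₑ) := by
        simp only [hconj, ← ENNReal.tsum_mul_right]
        exact tsum_congr fun i => tsum_congr fun k => by ring
    _ = ∑' k, ‖fourierCoeff (u * w) k‖ₑ * ‖fourierCoeff (u * w) k‖ₑ := by
        rw [ENNReal.tsum_comm]
        exact tsum_congr fun k => by rw [ENNReal.tsum_mul_left, ← hmul]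
    _ = ∑' k, ‖fourierCoeff (u * w) k‖ₑ ^ 2 := by simp only [sq]

theorem fourierCoeff_pow_nonneg {G : 𝕋 → ℂ} {n : ℕ} (hG : MemLp G (2 * n) haarAddCircle)
    (hG0 : ∀ k, 0 ≤ fourierCoeff G k) {k : ℕ} (hk : k ≤ n) (m : ℤ) :
    0 ≤ fourierCoeff (G ^ k) m :=
  fourierMajorizes_self_iff.1 ((fourierMajorizes_self_iff.2 hG0).pow hG hG hk) m

theorem fourierCoeff_conj_pow_mul_pow_nonneg {G : 𝕋 → ℂ} {n : ℕ}
    (hG : MemLp G (2 * (n + 1 : ℕ) : ℝ≥0∞) haarAddCircle) (hG0 : ∀ k, 0 ≤ fourierCoeff G k)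
    (m : ℤ) : 0 ≤ fourierCoeff (fun t => conj (G t) ^ n * G t ^ (n + 1)) m := by
  simpa using fourierCoeff_conj_mul_nonneg (hG.pow_of_le n.le_succ) (hG.pow_of_le le_rfl)
    (fourierCoeff_pow_nonneg hG hG0 n.le_succ) (fourierCoeff_pow_nonneg hG hG0 le_rfl) m

theorem tsum_enorm_fourierCoeff_conj_pow_mul_pow_mul_enorm {G : 𝕋 → ℂ} {n : ℕ}
    (hG : MemLp G (2 * (n + 1 : ℕ) : ℝ≥0∞) haarAddCircle) (hG0 : ∀ k, 0 ≤ fourierCoeff G k) :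
    ∑' i, ‖fourierCoeff (fun t => conj (G t) ^ n * G t ^ (n + 1)) i‖ₑ * ‖fourierCoeff G i‖ₑ =
      eLpNorm G (2 * (n + 1 : ℕ) : ℝ≥0∞) haarAddCircle ^ (2 * (n + 1)) := by
  have hGn1 : MemLp (G ^ n * G) 2 haarAddCircle := pow_succ G n ▸ hG.pow_of_le le_rfl
  have hfun : (fun t => conj (G t) ^ n * G t ^ (n + 1)) =
      fun t => conj ((G ^ n) t) * (G ^ n * G) t := by
    ext t; simp [pow_succ]
  rw [hfun, tsum_enorm_fourierCoeff_conj_mul_mul_enorm (hG.pow_of_le n.le_succ)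
    (by simpa using hG.pow_of_le (k := 1) (by omega)) hGn1
    (fourierCoeff_pow_nonneg hG hG0 n.le_succ) hG0,
    ← eLpNorm_two_sq_eq_tsum_enorm_fourierCoeff hGn1, ← pow_succ,
    eLpNorm_pow G (k := n + 1) (by omega), ← pow_mul, mul_comm (n + 1) 2]

end Fourier

/-- Theorem on dual norm inequality: if `G ∈ L^{2j}` has nonnegative real
Fourier coefficients, `F = (conj G)^{j-1} G^j`, and `f ∈ L^p` (`p = 2j/(2j-1)`) satisfies
`|f̂(n)| ≥ F̂(n)` wherever `Ĝ(n) ≠ 0`, then `‖f‖_p ≥ ‖F‖_p`. -/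
theorem dual_norm_inequality (j : ℕ) (hj : 1 < j)
    (p : ℝ≥0∞) (hp : p = (2 * j : ℝ≥0∞) / (2 * j - 1))
    (G : Circle2Pi → ℂ) (hG : MemLp G (2 * j : ℝ≥0∞) circleMeasure)
    (hGpos : ∀ n : ℤ, (fourierCoeff G n).im = 0 ∧ 0 ≤ (fourierCoeff G n).re)
    (F : Circle2Pi → ℂ)
    (hF : F = fun θ => (starRingEnd ℂ (G θ)) ^ (j - 1) * (G θ) ^ j)
    (f : Circle2Pi → ℂ) (hf : MemLp f p circleMeasure)
    (hdom : ∀ n : ℤ, fourierCoeff G n ≠ 0 →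
      (fourierCoeff F n).re ≤ ‖fourierCoeff f n‖) :
    eLpNorm F p circleMeasure ≤ eLpNorm f p circleMeasure := by
  obtain ⟨n, rfl⟩ : ∃ n, j = n + 1 := ⟨j - 1, by omega⟩
  set q : ℝ≥0∞ := 2 * ((n + 1 : ℕ) : ℝ≥0∞)
  have hq : q = ((2 * n + 1 : ℕ) : ℝ≥0∞) + 1 := by simp only [q]; push_cast; ring
  have hpq : p * ((2 * n + 1 : ℕ) : ℝ≥0∞) = q := by
    rw [hp, hq, ENNReal.add_sub_cancel_right ENNReal.one_ne_top,
      ENNReal.div_mul_cancel (by simp) (ENNReal.natCast_ne_top _)]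
  have : p.HolderConjugate q := hp ▸ ENNReal.holderConjugate_div_sub_one
    (by rw [hq]; exact le_add_self) (by simp [q, ENNReal.mul_eq_top])
  have hG0 : ∀ k, 0 ≤ fourierCoeff G k :=
    fun k => Complex.nonneg_iff.2 ⟨(hGpos k).2, (hGpos k).1.symm⟩
  have hFG : F = fun t => conj (G t) ^ n * G t ^ (n + 1) := by simpa using hF
  have key : eLpNorm G q circleMeasure ^ (2 * n + 1 + 1) ≤
      eLpNorm f p circleMeasure * eLpNorm G q circleMeasure :=
    calc eLpNorm G q circleMeasure ^ (2 * n + 1 + 1)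
        = ∑' i, ‖fourierCoeff F i‖ₑ * ‖fourierCoeff G i‖ₑ := by
          rw [hFG, tsum_enorm_fourierCoeff_conj_pow_mul_pow_mul_enorm hG hG0]
          congr 1
      _ ≤ ∑' i, ‖fourierCoeff f i‖ₑ * ‖fourierCoeff G i‖ₑ := by
          refine ENNReal.tsum_le_tsum fun i => ?_
          rcases eq_or_ne (fourierCoeff G i) 0 with hGi | hGi
          · simp [hGi]
          · have hF0 := hFG ▸ fourierCoeff_conj_pow_mul_pow_nonneg hG hG0 i
            gcongr
            rw [enorm_le_iff_norm_le, ← Complex.re_eq_norm.2 hF0]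
            exact hdom i hGi
      _ ≤ eLpNorm f p circleMeasure * eLpNorm G q circleMeasure :=
          tsum_enorm_fourierCoeff_mul_le n.succ_ne_zero hf hG hG0
  rw [hFG, eLpNorm_conj_pow_mul_pow, hpq]
  exact ENNReal.pow_le_of_pow_succ_le_mul (by omega) hG.eLpNorm_ne_top key
end
end

section
/- Let j be an integer with j > 1, let G be a nonzero function in L^{2j} with Ĝ(n) real and Ĝ(n) ≥ 0 for all n ∈ ℤ, and let F = (conj G)^{j-1} G^j. Then for every n ∈ ℤ the coefficient F̂(n) is real and nonnegative, the 0-th Fourier coefficient a of |G|^{2j-2} is a strictly positive real number, and F̂(n) ≥ a·Ĝ(n) for all n; in particular, Ĝ(n) > 0 implies F̂(n) > 0, so the support of Ĝ is contained in the support of F̂. -/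
/-!
Write `w = G^(j-1)`, so that `F = conj w · (w G)` and `a = (conj w · w)^(0) = ∑ ŵ(m)²` by
Parseval. Coefficients of products of `L²` functions are convolutions of coefficient sequences,
so `ŵ ≥ 0`, and `(w G)^(m) = ∑ₗ ŵ(m-l) Ĝ(l) ≥ ŵ(m-n) Ĝ(n)`. Hence
`F̂(n) = ∑ₘ ŵ(m-n) (w G)^(m) ≥ ∑ₘ ŵ(m-n)² Ĝ(n) = a Ĝ(n)`, and `a > 0` because `w ≠ 0`.
-/

open MeasureTheory Complex
open scoped Real ENNReal

noncomputable section

open AddCircle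
open scoped ComplexConjugate ComplexOrder InnerProductSpace

theorem MeasureTheory.MemLp.pow_of_le_s16 {α 𝕜 : Type*} [MeasurableSpace α] {μ : Measure α}
    [IsFiniteMeasure μ] [NormedDivisionRing 𝕜] {f : α → 𝕜} {p : ℝ≥0∞} {j k : ℕ}
    (hf : MemLp f (p * j) μ) (hk : k ≠ 0) (hkj : k ≤ j) :
    MemLp (fun x => f x ^ k) p μ := by
  have hfk : MemLp f (p * k) μ := hf.mono_exponent (by gcongr)
  have hnorm := hfk.norm_rpow_div k
  rw [ENNReal.mul_div_cancel_right (by exact_mod_cast hk) (ENNReal.natCast_ne_top k)] at hnorm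
  refine (memLp_norm_iff (hf.1.pow k)).1 ?_
  simpa [norm_pow] using hnorm

section FourierCoeff

variable {T : ℝ} [Fact (0 < T)]

theorem fourierCoeff_conj_s16 (f : AddCircle T → ℂ) (n : ℤ) :
    fourierCoeff (fun x => conj (f x)) n = conj (fourierCoeff f (-n)) := by
  rw [fourierCoeff, fourierCoeff, ← integral_conj]
  simp

theorem fourierCoeff_fourier_mul (f : AddCircle T → ℂ) (k n : ℤ) :
    fourierCoeff (fun x => fourier k x * f x) n = fourierCoeff f (n - k) := by
  simp only [fourierCoeff, smul_eq_mul, ← mul_assoc, ← fourier_add, neg_sub, neg_add_eq_sub]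

theorem inner_fourierBasis_toLp {f : AddCircle T → ℂ} (hf : MemLp f 2 haarAddCircle) (n : ℤ) :
    ⟪fourierBasis n, hf.toLp f⟫_ℂ = fourierCoeff f n := by
  rw [← fourierBasis.repr_apply_apply, fourierBasis_repr, fourierCoeff_congr_ae hf.coeFn_toLp]

theorem ae_eq_zero_of_fourierCoeff_eq_zero {f : AddCircle T → ℂ} (hf : MemLp f 2 haarAddCircle)
    (h : ∀ n, fourierCoeff f n = 0) : f =ᵐ[haarAddCircle] 0 := by
  have hrepr : fourierBasis.repr (hf.toLp f) = 0 := by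
    ext n
    rw [fourierBasis.repr_apply_apply, inner_fourierBasis_toLp, h]
    rfl
  rw [LinearIsometryEquiv.map_eq_zero_iff] at hrepr
  filter_upwards [hf.coeFn_toLp, Lp.coeFn_zero ℂ 2 haarAddCircle] with x hfx h0x
  rw [← hfx, hrepr, h0x]

theorem hasSum_fourierCoeff_mul_s16 {f g : AddCircle T → ℂ} (hf : MemLp f 2 haarAddCircle)
    (hg : MemLp g 2 haarAddCircle) (n : ℤ) :
    HasSum (fun m => fourierCoeff f (n - m) * fourierCoeff g m)
      (fourierCoeff (fun x => f x * g x) n) := by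
  set u : AddCircle T → ℂ := fun x => fourier n x * conj (f x)
  have hu : MemLp u 2 haarAddCircle := by
    refine hf.star.of_le ((map_continuous _).aestronglyMeasurable.mul hf.star.1) ?_
    exact .of_forall fun x => by simp [u, Circle.norm_coe]
  have hinner : ⟪hu.toLp u, hg.toLp g⟫_ℂ = fourierCoeff (fun x => f x * g x) n := by
    rw [L2.inner_def, fourierCoeff]
    refine integral_congr_ae ?_
    filter_upwards [hu.coeFn_toLp, hg.coeFn_toLp] with x hux hgx
    rw [RCLike.inner_apply, hux, hgx]
    simp only [u, map_mul, conj_conj, ← fourier_neg, smul_eq_mul]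
    ring
  have hsum := fourierBasis.hasSum_inner_mul_inner (hu.toLp u) (hg.toLp g)
  rw [hinner] at hsum
  refine hsum.congr_fun fun m => ?_
  rw [← inner_conj_symm, inner_fourierBasis_toLp, inner_fourierBasis_toLp,
    fourierCoeff_fourier_mul, fourierCoeff_conj_s16, conj_conj, neg_sub]

theorem fourierCoeff_mul_nonneg {f g : AddCircle T → ℂ} (hf : MemLp f 2 haarAddCircle)
    (hg : MemLp g 2 haarAddCircle) (hf0 : ∀ n, 0 ≤ fourierCoeff f n)
    (hg0 : ∀ n, 0 ≤ fourierCoeff g n) (n : ℤ) :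
    0 ≤ fourierCoeff (fun x => f x * g x) n :=
  (hasSum_fourierCoeff_mul_s16 hf hg n).nonneg fun _ => mul_nonneg (hf0 _) (hg0 _)

theorem fourierCoeff_pow_nonneg_s16 {f : AddCircle T → ℂ} {j k : ℕ}
    (hf : MemLp f (2 * j) haarAddCircle) (hf0 : ∀ n, 0 ≤ fourierCoeff f n) (hk : k ≠ 0)
    (hkj : k ≤ j) (n : ℤ) : 0 ≤ fourierCoeff (fun x => f x ^ k) n := by
  induction k generalizing n with
  | zero => exact absurd rfl hk
  | succ k ih =>
    rcases eq_or_ne k 0 with rfl | hk'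
    · simpa using hf0 n
    simp only [pow_succ]
    exact fourierCoeff_mul_nonneg (hf.pow_of_le_s16 hk' (by omega))
      (by simpa using hf.pow_of_le_s16 one_ne_zero (by omega)) (ih hk' (by omega)) hf0 n

theorem hasSum_conj_mul_fourierCoeff {w : AddCircle T → ℂ} (hw : MemLp w 2 haarAddCircle) :
    HasSum (fun m => conj (fourierCoeff w m) * fourierCoeff w m)
      (fourierCoeff (fun x => conj (w x) * w x) 0) := by
  convert hasSum_fourierCoeff_mul_s16 (f := fun x => conj (w x)) hw.star hw 0 using 2 with m
  rw [fourierCoeff_conj_s16, zero_sub, neg_neg]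

theorem fourierCoeff_conj_mul_self_pos {w : AddCircle T → ℂ} (hw : MemLp w 2 haarAddCircle)
    (hw0 : ¬ w =ᵐ[haarAddCircle] 0) : 0 < fourierCoeff (fun x => conj (w x) * w x) 0 := by
  obtain ⟨m, hm⟩ : ∃ m, fourierCoeff w m ≠ 0 := by
    by_contra! h
    exact hw0 (ae_eq_zero_of_fourierCoeff_eq_zero hw h)
  have hterm : ∀ m,
      conj (fourierCoeff w m) * fourierCoeff w m = (‖fourierCoeff w m‖ ^ 2 : ℝ) := fun m => by
    rw [conj_mul', ofReal_pow]
  refine lt_of_lt_of_le ?_ (le_hasSum (hasSum_conj_mul_fourierCoeff hw) m fun i _ => ?_)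
  · rw [hterm, zero_lt_real]
    exact pow_pos (norm_pos_iff.2 hm) 2
  · rw [hterm, zero_le_real]
    exact sq_nonneg _

theorem fourierCoeff_conj_mul_self_mul_le {w g : AddCircle T → ℂ} (hw : MemLp w 2 haarAddCircle)
    (hg : MemLp g 2 haarAddCircle) (hwg : MemLp (fun x => w x * g x) 2 haarAddCircle)
    (hw0 : ∀ n, 0 ≤ fourierCoeff w n) (hg0 : ∀ n, 0 ≤ fourierCoeff g n) (n : ℤ) :
    fourierCoeff (fun x => conj (w x) * w x) 0 * fourierCoeff g n ≤
      fourierCoeff (fun x => conj (w x) * (w x * g x)) n := by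
  have hreal : ∀ m, conj (fourierCoeff w m) = fourierCoeff w m :=
    fun m => (IsSelfAdjoint.of_nonneg (hw0 m)).star_eq
  have hlow : HasSum (fun m => fourierCoeff w (m - n) * fourierCoeff w (m - n) * fourierCoeff g n)
      (fourierCoeff (fun x => conj (w x) * w x) 0 * fourierCoeff g n) := by
    have hsq := (hasSum_conj_mul_fourierCoeff hw).mul_right (fourierCoeff g n)
    simp only [hreal] at hsq
    exact (Equiv.subRight n).hasSum_iff
      (f := fun m => fourierCoeff w m * fourierCoeff w m * fourierCoeff g n) |>.2 hsq
  have hupp : HasSum (fun m => fourierCoeff w (m - n) * fourierCoeff (fun x => w x * g x) m)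
      (fourierCoeff (fun x => conj (w x) * (w x * g x)) n) := by
    convert hasSum_fourierCoeff_mul_s16 (f := fun x => conj (w x)) hw.star hwg n using 2 with m
    rw [fourierCoeff_conj_s16, neg_sub, hreal]
  refine hasSum_le (fun m => ?_) hlow hupp
  rw [mul_assoc]
  refine mul_le_mul_of_nonneg_left ?_ (hw0 _)
  exact le_hasSum (hasSum_fourierCoeff_mul_s16 hw hg m) n fun l _ => mul_nonneg (hw0 _) (hg0 _)

end FourierCoeff

/-- if `G ∈ L^{2j}` is nonzero with nonnegative real Fourier coefficients
and `F = (conj G)^{j-1} G^j`, then `F̂` is real and nonnegative, the 0-th coefficient `a`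
of `|G|^{2j-2} = (conj G · G)^{j-1}` is real and strictly positive, `F̂(n) ≥ a Ĝ(n)` for
all `n`, and the support of `Ĝ` is contained in the support of `F̂`. -/
theorem support_of_G_in_support_of_F (j : ℕ) (hj : 1 < j)
    (G : Circle2Pi → ℂ) (hG : MemLp G (2 * j : ℝ≥0∞) circleMeasure)
    (hG0 : ¬ G =ᵐ[circleMeasure] 0)
    (hGpos : ∀ n : ℤ, (fourierCoeff G n).im = 0 ∧ 0 ≤ (fourierCoeff G n).re)
    (F : Circle2Pi → ℂ)
    (hF : F = fun θ => (starRingEnd ℂ (G θ)) ^ (j - 1) * (G θ) ^ j)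
    (a : ℂ)
    (ha : a = fourierCoeff (fun θ => ((starRingEnd ℂ (G θ)) * G θ) ^ (j - 1)) 0) :
    (∀ n : ℤ, (fourierCoeff F n).im = 0 ∧ 0 ≤ (fourierCoeff F n).re) ∧
    (a.im = 0 ∧ 0 < a.re) ∧
    (∀ n : ℤ, a.re * (fourierCoeff G n).re ≤ (fourierCoeff F n).re) ∧
    (∀ n : ℤ, fourierCoeff G n ≠ 0 → fourierCoeff F n ≠ 0) := by
  set w : Circle2Pi → ℂ := fun θ => G θ ^ (j - 1)
  have hG0' : ∀ n, 0 ≤ fourierCoeff G n := fun n =>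
    nonneg_iff.2 ⟨(hGpos n).2, (hGpos n).1.symm⟩
  have hwG : ∀ θ, w θ * G θ = G θ ^ j := fun θ => pow_sub_one_mul (by omega) (G θ)
  have hw0 : ∀ n, 0 ≤ fourierCoeff w n := fourierCoeff_pow_nonneg_s16 hG hG0' (by omega) (by omega)
  have hF' : F = fun θ => conj (w θ) * (w θ * G θ) := by simp only [hF, hwG, w, map_pow]
  have ha' : a = fourierCoeff (fun θ => conj (w θ) * w θ) 0 := by
    simp only [ha, w, map_pow, mul_pow]
  have hapos : 0 < a := ha' ▸ fourierCoeff_conj_mul_self_pos (hG.pow_of_le_s16 (by omega) (by omega))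
    fun hw => hG0 (hw.mono fun θ hθ => pow_eq_zero_iff (by omega) |>.1 hθ)
  have hbound : ∀ n, a * fourierCoeff G n ≤ fourierCoeff F n := by
    rw [hF', ha']
    exact fourierCoeff_conj_mul_self_mul_le (hG.pow_of_le_s16 (by omega) (by omega))
      (by simpa using hG.pow_of_le_s16 one_ne_zero (by omega))
      (by simpa only [hwG] using hG.pow_of_le_s16 (by omega) le_rfl) hw0 hG0'
  have hF0 : ∀ n, 0 ≤ fourierCoeff F n := fun n =>
    (mul_nonneg hapos.le (hG0' n)).trans (hbound n)
  refine ⟨fun n => ⟨(nonneg_iff.1 (hF0 n)).2.symm, (nonneg_iff.1 (hF0 n)).1⟩,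
    ⟨(lt_def.1 hapos).2.symm, (lt_def.1 hapos).1⟩, fun n => ?_, fun n hn => ?_⟩
  · simpa [(lt_def.1 hapos).2.symm, (hGpos n).1] using (le_def.1 (hbound n)).1
  · exact ((mul_pos hapos ((hG0' n).lt_of_ne' hn)).trans_le (hbound n)).ne'
end
end

section
/- Let j be an integer with j > 1 and let G be a trigonometric polynomial with Ĝ(n) real and Ĝ(n) ≥ 0 for all n ∈ ℤ. Then the number of nonzero Fourier coefficients of F = (conj G)^{j-1} G^j is either at most 1 or at least 4. In particular, no trigonometric polynomial with exactly 2 or exactly 3 nonzero Fourier coefficients can be written in the form (conj G)^{j-1} G^j with Ĝ nonnegative. -/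
open MeasureTheory Complex
open scoped Real ENNReal

noncomputable section

/-- A trigonometric polynomial: a finite linear combination of the exponentials `e^{inθ}`. -/
def IsTrigPoly (g : Circle2Pi → ℂ) : Prop :=
  ∃ (s : Finset ℤ) (a : ℤ → ℂ), ∀ x, g x = ∑ n ∈ s, a n * fourier n x

-- integral of a character
lemma integral_fourier (m : ℤ) :
    ∫ x : Circle2Pi, fourier m x ∂circleMeasure = if m = 0 then 1 else 0 := by
  split_ifs with hm
  · subst hm
    simp only [fourier_zero]
    simp
  · exact integral_eq_zero_of_add_right_eq_neg (μ := AddCircle.haarAddCircle)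
      (fourier_add_half_inv_index hm (by positivity))

lemma fourierCoeff_sum (s : Finset ℤ) (a : ℤ → ℂ) (k : ℤ) :
    fourierCoeff (fun x : Circle2Pi => ∑ n ∈ s, a n * fourier n x) k
      = if k ∈ s then a k else 0 := by
  have h1 : ∀ x : Circle2Pi,
      (fourier (-k) x : ℂ) • (∑ n ∈ s, a n * fourier n x)
        = ∑ n ∈ s, a n * fourier (n + -k) x := by
    intro x
    rw [smul_eq_mul, Finset.mul_sum]
    refine Finset.sum_congr rfl fun n _ => ?_
    rw [fourier_add]; ring
  rw [fourierCoeff]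
  calc (∫ x : Circle2Pi, (fourier (-k) x : ℂ) • (∑ n ∈ s, a n * fourier n x) ∂AddCircle.haarAddCircle)
      = ∫ x : Circle2Pi, ∑ n ∈ s, a n * fourier (n + -k) x ∂AddCircle.haarAddCircle := by
        exact integral_congr_ae (Filter.Eventually.of_forall h1)
    _ = ∑ n ∈ s, ∫ x : Circle2Pi, a n * fourier (n + -k) x ∂AddCircle.haarAddCircle := by
        refine integral_finset_sum s fun n _ => ?_
        exact (Continuous.integrable_of_hasCompactSupport
          (continuous_const.mul (fourier (n + -k)).continuous)
          (HasCompactSupport.of_compactSpace _))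
    _ = ∑ n ∈ s, a n * if n + -k = 0 then 1 else 0 := by
        refine Finset.sum_congr rfl fun n _ => ?_
        rw [integral_const_mul, integral_fourier]
    _ = if k ∈ s then a k else 0 := by
        simp only [add_neg_eq_zero, mul_ite, mul_one, mul_zero]
        exact Finset.sum_ite_eq' s k a

abbrev TP := AddMonoidAlgebra ℂ ℤ

def fourierHom : Multiplicative ℤ →* (Circle2Pi → ℂ) where
  toFun n := fun x => fourier (Multiplicative.toAdd n) x
  map_one' := by funext x; exact fourier_zero
  map_mul' m n := by funext x; exact fourier_add

def ev : TP →ₐ[ℂ] (Circle2Pi → ℂ) := AddMonoidAlgebra.lift ℂ _ ℤ fourierHom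

lemma ev_apply (f : TP) (x : Circle2Pi) :
    ev f x = ∑ n ∈ f.coeff.support, f.coeff n * fourier n x := by
  rw [ev, AddMonoidAlgebra.lift_apply]
  rw [Finsupp.sum, Finset.sum_apply]
  rfl

lemma fourierCoeff_ev (f : TP) (k : ℤ) : fourierCoeff (ev f) k = f.coeff k := by
  have : (ev f : Circle2Pi → ℂ) = fun x => ∑ n ∈ f.coeff.support, f.coeff n * fourier n x :=
    funext (ev_apply f)
  rw [this, fourierCoeff_sum]
  by_cases h : k ∈ f.coeff.support
  · simp [h]
  · simp [h, Finsupp.notMem_support_iff.mp h]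

/-- flip of coefficients `n ↦ -n`. -/
def Jc (f : TP) : TP := .ofCoeff (Finsupp.equivMapDomain (Equiv.neg ℤ) f.coeff)

lemma Jc_apply (f : TP) (n : ℤ) : (Jc f).coeff n = f.coeff (-n) := rfl

lemma Jc_support (f : TP) :
    (Jc f).coeff.support = f.coeff.support.map (Equiv.neg ℤ).toEmbedding := rfl

/-- nonnegative real coefficients -/
def Pos (f : TP) : Prop := ∀ n, (f.coeff n).im = 0 ∧ 0 ≤ (f.coeff n).re

lemma Pos.Jc {f : TP} (hf : Pos f) : Pos (Jc f) := fun n => hf (-n)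

lemma ev_Jc {f : TP} (hf : Pos f) (x : Circle2Pi) :
    ev (Jc f) x = starRingEnd ℂ (ev f x) := by
  rw [ev_apply, ev_apply, map_sum, Jc_support, Finset.sum_map]
  refine Finset.sum_congr rfl fun n _ => ?_
  have h1 : (Jc f).coeff ((Equiv.neg ℤ).toEmbedding n) = f.coeff n := by
    simp [Jc_apply]
  rw [h1, map_mul]
  have h2 : starRingEnd ℂ (f.coeff n) = f.coeff n := Complex.conj_eq_iff_im.mpr (hf n).1
  rw [h2]
  congr 1
  rw [← fourier_neg]
  rfl

open scoped Pointwise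

lemma Pos.re_pos {f : TP} (hf : Pos f) {n : ℤ} (hn : n ∈ f.coeff.support) : 0 < (f.coeff n).re := by
  rcases hf n with ⟨h1, h2⟩
  rcases h2.lt_or_eq with h | h
  · exact h
  · exact absurd (Complex.ext (by simp [← h]) (by simp [h1]))
      (Finsupp.mem_support_iff.mp hn)

lemma pos_mul {f g : TP} (hf : Pos f) (hg : Pos g) :
    Pos (f * g) ∧ (f * g).coeff.support = f.coeff.support + g.coeff.support := by
  classical
  have key : ∀ a : ℤ, (f * g).coeff a
      = ∑ x ∈ f.coeff.support, ∑ y ∈ g.coeff.support, if x + y = a then f.coeff x * g.coeff y else 0 := by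
    intro a
    rw [AddMonoidAlgebra.coeff_mul]
    rfl
  have tim : ∀ (a x y : ℤ), ((if x + y = a then f.coeff x * g.coeff y else 0)).im = 0 := by
    intro a x y
    split_ifs
    · rw [Complex.mul_im, (hf x).1, (hg y).1]; ring
    · rfl
  have tre : ∀ (a x y : ℤ), 0 ≤ ((if x + y = a then f.coeff x * g.coeff y else 0)).re := by
    intro a x y
    split_ifs
    · rw [Complex.mul_re, (hf x).1, (hg y).1]
      simpa using mul_nonneg (hf x).2 (hg y).2
    · exact le_rfl
  constructor
  · intro a
    constructor
    · rw [key, Complex.im_sum]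
      exact Finset.sum_eq_zero fun x _ => by
        rw [Complex.im_sum]; exact Finset.sum_eq_zero fun y _ => tim a x y
    · rw [key, Complex.re_sum]
      exact Finset.sum_nonneg fun x _ => by
        rw [Complex.re_sum]; exact Finset.sum_nonneg fun y _ => tre a x y
  · refine Finset.Subset.antisymm (AddMonoidAlgebra.support_coeff_mul_subset f g) ?_
    intro a ha
    rw [Finset.mem_add] at ha
    obtain ⟨x, hx, y, hy, rfl⟩ := ha
    rw [Finsupp.mem_support_iff]
    intro h0
    have hpos : 0 < ((f * g).coeff (x + y)).re := by
      rw [key, Complex.re_sum]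
      refine Finset.sum_pos' (fun x' _ => by
        rw [Complex.re_sum]; exact Finset.sum_nonneg fun y' _ => tre _ x' y') ⟨x, hx, ?_⟩
      rw [Complex.re_sum]
      refine Finset.sum_pos' (fun y' _ => tre _ x y') ⟨y, hy, ?_⟩
      rw [if_pos rfl, Complex.mul_re, (hf x).1, (hg y).1]
      have := mul_pos (hf.re_pos hx) (hg.re_pos hy)
      nlinarith
    rw [h0] at hpos
    simp at hpos

lemma pos_one : Pos (1 : TP) := by
  intro n
  have : (1 : TP).coeff n = if n = 0 then 1 else 0 := by
    rw [AddMonoidAlgebra.one_def, AddMonoidAlgebra.coeff_single, Finsupp.single_apply]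
    simp [eq_comm]
  rw [this]
  split_ifs <;> simp

lemma pos_pow {f : TP} (hf : Pos f) : ∀ k : ℕ, Pos (f ^ k)
  | 0 => by rw [pow_zero]; exact pos_one
  | (k+1) => by rw [pow_succ]; exact (pos_mul (pos_pow hf k) hf).1

lemma zero_mem_support_pow {f : TP} (hf : Pos f) (h0 : (0:ℤ) ∈ f.coeff.support) :
    ∀ k : ℕ, (0:ℤ) ∈ (f ^ k).coeff.support
  | 0 => by
      rw [pow_zero, AddMonoidAlgebra.one_def, AddMonoidAlgebra.coeff_single,
        Finsupp.support_single_ne_zero 0 one_ne_zero]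
      exact Finset.mem_singleton_self 0
  | (k+1) => by
      rw [pow_succ, (pos_mul (pos_pow hf k) hf).2]
      exact Finset.add_mem_add (zero_mem_support_pow hf h0 k) h0

lemma mem_support_pow {f : TP} (hf : Pos f) (h0 : (0:ℤ) ∈ f.coeff.support) {x : ℤ}
    (hx : x ∈ f.coeff.support) {k : ℕ} (hk : 1 ≤ k) : x ∈ (f ^ k).coeff.support := by
  obtain ⟨l, rfl⟩ := Nat.exists_eq_add_of_le hk
  rw [add_comm, pow_succ, (pos_mul (pos_pow hf l) hf).2]
  have := Finset.add_mem_add (zero_mem_support_pow hf h0 l) hx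
  simpa using this

lemma support_pow_subset {f : TP} (hq : f.coeff.support ⊆ {0}) :
    ∀ k : ℕ, (f ^ k).coeff.support ⊆ {0}
  | 0 => by
      rw [pow_zero, AddMonoidAlgebra.one_def, AddMonoidAlgebra.coeff_single,
        Finsupp.support_single_ne_zero 0 one_ne_zero]
  | (k+1) => by
      rw [pow_succ]
      refine (AddMonoidAlgebra.support_coeff_mul_subset _ _).trans ?_
      calc (f ^ k).coeff.support + f.coeff.support ⊆ ({0} : Finset ℤ) + {0} :=
            Finset.add_subset_add (support_pow_subset hq k) hq
        _ = {0} := by rw [Finset.singleton_add_singleton, add_zero]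

lemma main_bound (j : ℕ) (hj : 1 < j)
    (G : Circle2Pi → ℂ) (hG : IsTrigPoly G)
    (hGpos : ∀ n : ℤ, (fourierCoeff G n).im = 0 ∧ 0 ≤ (fourierCoeff G n).re)
    (F : Circle2Pi → ℂ)
    (hF : F = fun θ => (starRingEnd ℂ (G θ)) ^ (j - 1) * (G θ) ^ j) :
    {n : ℤ | fourierCoeff F n ≠ 0}.Finite ∧
      ({n : ℤ | fourierCoeff F n ≠ 0}.ncard ≤ 1 ∨
        4 ≤ {n : ℤ | fourierCoeff F n ≠ 0}.ncard) := by
  classical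
  obtain ⟨s, a, hGa⟩ := hG
  set c : TP := ∑ n ∈ s, AddMonoidAlgebra.single n (a n) with hc
  have hevc : ev c = G := by
    funext x
    rw [hc, map_sum, Finset.sum_apply, hGa x]
    refine Finset.sum_congr rfl fun n _ => ?_
    rw [ev, AddMonoidAlgebra.lift_single]
    simp [fourierHom]
  have hcoeff : ∀ n, fourierCoeff G n = c.coeff n := fun n => by
    rw [← hevc, fourierCoeff_ev]
  have hPc : Pos c := fun n => by rw [← hcoeff n]; exact hGpos n
  set q : TP := Jc c * c with hqdef
  have hq := pos_mul hPc.Jc hPc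
  set k := j - 1 with hk
  have hkj : j = k + 1 := by omega
  have hk1 : 1 ≤ k := by omega
  set D : TP := q ^ k * c with hD
  have hPD := pos_mul (pos_pow hq.1 k) hPc
  have hevD : ev D = F := by
    funext θ
    rw [hF]
    simp only
    rw [hD, map_mul, map_pow, Pi.mul_apply, Pi.pow_apply]
    have hq' : ev q θ = starRingEnd ℂ (G θ) * G θ := by
      rw [hqdef, map_mul, Pi.mul_apply, ev_Jc hPc, hevc]
    rw [hq', hevc, hkj]
    rw [mul_pow, pow_succ]
    ring_nf
  have hcoeffF : ∀ n, fourierCoeff F n = D.coeff n := fun n => by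
    rw [← hevD, fourierCoeff_ev]
  have hset : {n : ℤ | fourierCoeff F n ≠ 0} = ↑D.coeff.support := by
    ext n
    simp [hcoeffF n, Finsupp.mem_support_iff]
  rw [hset, Set.ncard_coe_finset]
  refine ⟨D.coeff.support.finite_toSet, ?_⟩
  by_cases hcard : c.coeff.support.card ≤ 1
  · left
    obtain ⟨s₀, hs0⟩ := Finset.card_le_one_iff_subset_singleton.mp hcard
    have hJ : (Jc c).coeff.support ⊆ {-s₀} := by
      intro n hn
      rw [Finsupp.mem_support_iff, Jc_apply] at hn
      have h2 : -n ∈ c.coeff.support := Finsupp.mem_support_iff.mpr hn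
      have h3 := hs0 h2
      rw [Finset.mem_singleton] at h3 ⊢
      omega
    have hq' : q.coeff.support ⊆ {0} := by
      rw [hq.2]
      refine (Finset.add_subset_add hJ hs0).trans ?_
      rw [Finset.singleton_add_singleton, neg_add_cancel]
    have hD' : D.coeff.support ⊆ {s₀} := by
      rw [hPD.2]
      refine (Finset.add_subset_add (support_pow_subset hq' k) hs0).trans ?_
      rw [Finset.singleton_add_singleton, zero_add]
    calc D.coeff.support.card ≤ ({s₀} : Finset ℤ).card := Finset.card_le_card hD'
      _ = 1 := Finset.card_singleton s₀
  · right
    push_neg at hcard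
    obtain ⟨x, hx, y, hy, hxy⟩ := Finset.one_lt_card.mp hcard
    obtain ⟨m, M, hm, hM, hmM⟩ : ∃ m M : ℤ, m ∈ c.coeff.support ∧ M ∈ c.coeff.support ∧ m < M := by
      rcases lt_or_gt_of_ne hxy with h | h
      · exact ⟨x, y, hx, hy, h⟩
      · exact ⟨y, x, hy, hx, h⟩
    have hJmem : ∀ z : ℤ, z ∈ c.coeff.support → -z ∈ (Jc c).coeff.support := by
      intro z hz
      rw [Finsupp.mem_support_iff, Jc_apply, neg_neg]
      exact Finsupp.mem_support_iff.mp hz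
    have h0q : (0 : ℤ) ∈ q.coeff.support := by
      rw [hq.2]
      have := Finset.add_mem_add (hJmem m hm) hm
      simpa using this
    have hnd : -M + m ∈ q.coeff.support := by
      rw [hq.2]; exact Finset.add_mem_add (hJmem M hM) hm
    have hpd : -m + M ∈ q.coeff.support := by
      rw [hq.2]; exact Finset.add_mem_add (hJmem m hm) hM
    have e1 : 2 * m - M ∈ D.coeff.support := by
      rw [hPD.2]
      have := Finset.add_mem_add (mem_support_pow hq.1 h0q hnd hk1) hm
      rwa [show -M + m + m = 2 * m - M by ring] at this
    have e2 : m ∈ D.coeff.support := by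
      rw [hPD.2]
      have := Finset.add_mem_add (zero_mem_support_pow hq.1 h0q k) hm
      simpa using this
    have e3 : M ∈ D.coeff.support := by
      rw [hPD.2]
      have := Finset.add_mem_add (zero_mem_support_pow hq.1 h0q k) hM
      simpa using this
    have e4 : 2 * M - m ∈ D.coeff.support := by
      rw [hPD.2]
      have := Finset.add_mem_add (mem_support_pow hq.1 h0q hpd hk1) hM
      rwa [show -m + M + M = 2 * M - m by ring] at this
    have hsub : ({2 * m - M, m, M, 2 * M - m} : Finset ℤ) ⊆ D.coeff.support := by
      refine Finset.insert_subset_iff.mpr ⟨e1, ?_⟩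
      refine Finset.insert_subset_iff.mpr ⟨e2, ?_⟩
      refine Finset.insert_subset_iff.mpr ⟨e3, ?_⟩
      exact Finset.singleton_subset_iff.mpr e4
    have hcard4 : ({2 * m - M, m, M, 2 * M - m} : Finset ℤ).card = 4 := by
      rw [Finset.card_insert_of_notMem (by simp; omega),
        Finset.card_insert_of_notMem (by simp; omega),
        Finset.card_insert_of_notMem (by simp; omega),
        Finset.card_singleton]
    calc 4 = ({2 * m - M, m, M, 2 * M - m} : Finset ℤ).card := hcard4.symm
      _ ≤ D.coeff.support.card := Finset.card_le_card hsub


/-- if `G` is a trigonometric polynomial with nonnegative real Fourier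
coefficients and `F = (conj G)^{j-1} G^j` with `j > 1`, then the number of nonzero Fourier
coefficients of `F` is at most `1` or at least `4`; in particular no trigonometric
polynomial with exactly `2` or `3` nonzero coefficients has this form. -/
theorem spectrum_size_of_product (j : ℕ) (hj : 1 < j)
    (G : Circle2Pi → ℂ) (hG : IsTrigPoly G)
    (hGpos : ∀ n : ℤ, (fourierCoeff G n).im = 0 ∧ 0 ≤ (fourierCoeff G n).re)
    (F : Circle2Pi → ℂ)
    (hF : F = fun θ => (starRingEnd ℂ (G θ)) ^ (j - 1) * (G θ) ^ j) :
    ({n : ℤ | fourierCoeff F n ≠ 0}.Finite ∧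
      ({n : ℤ | fourierCoeff F n ≠ 0}.ncard ≤ 1 ∨
        4 ≤ {n : ℤ | fourierCoeff F n ≠ 0}.ncard)) ∧
    (∀ h : Circle2Pi → ℂ, IsTrigPoly h →
      ({n : ℤ | fourierCoeff h n ≠ 0}.ncard = 2 ∨
        {n : ℤ | fourierCoeff h n ≠ 0}.ncard = 3) →
      ¬ ∃ G' : Circle2Pi → ℂ, IsTrigPoly G' ∧
        (∀ n : ℤ, (fourierCoeff G' n).im = 0 ∧ 0 ≤ (fourierCoeff G' n).re) ∧
        h = fun θ => (starRingEnd ℂ (G' θ)) ^ (j - 1) * (G' θ) ^ j) := by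
  refine ⟨main_bound j hj G hG hGpos F hF, ?_⟩
  rintro h hTP hcard ⟨G', hG', hpos', hform⟩
  have := (main_bound j hj G' hG' hpos' h hform).2
  omega
end
end
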